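/- arXiv:2510.22273 — 4 statements merged into one kernel-verified Lean document; each statement's English description precedes it below -/
import Mathlib

section
/- Let n ≥ 1, m ≥ 1, s₁,…,s_m > 0, and set λ = ∑_{j=1}^m s_j. For every function g harmonic on ℍ with sup_{(x,t)∈ℍ} |g(x,t)| t^λ < ∞ there exists a function f : ℍ^m → ℝ which is harmonic in each variable separately, satisfies sup_{(z₁,…,z_m)∈ℍ^m} |f(z₁,…,z_m)| t₁^{s₁}⋯t_m^{s_m} < ∞ (where z_j = (x_j,t_j)), and f(z,…,z) = g(z) for all z ∈ ℍ. In other words, A^∞_λ(ℍ) ⊆ Trace(h̃A^∞_{s⃗}). -/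
open MeasureTheory

/-- A real-valued function on `ι → ℝ` is harmonic on an open set `U` if it is `C²` on `U`
and the sum of its unmixed second partial derivatives vanishes identically on `U`. -/
def IsHarmonicOn {ι : Type*} [Fintype ι] [DecidableEq ι]
    (f : (ι → ℝ) → ℝ) (U : Set (ι → ℝ)) : Prop :=
  ContDiffOn ℝ 2 f U ∧
    ∀ x ∈ U, ∑ i, fderiv ℝ (fun y => fderiv ℝ f y (Pi.single i 1)) x (Pi.single i 1) = 0

/-- A function on `ℍ^m` is harmonic in each variable separately: for each index `j` and each
fixed choice of the other variables (all lying in `ℍ`), the map `z_j ↦ f(z₁,…,z_m)` is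
harmonic on `ℍ`. -/
def HarmonicEachVar (n m : ℕ) (f : ((Fin m × Fin (n + 1)) → ℝ) → ℝ) : Prop :=
  ∀ (j : Fin m) (w : (Fin m × Fin (n + 1)) → ℝ),
    (∀ i : Fin m, 0 < w (i, Fin.last n)) →
    IsHarmonicOn (fun y : Fin (n + 1) → ℝ => f (fun q => if q.1 = j then y q.2 else w q))
      {y : Fin (n + 1) → ℝ | 0 < y (Fin.last n)}

/-! Take `f(z₁,…,z_m) = g((z₁+⋯+z_m)/m)`, whose trace is `g`. Each slice `z_j ↦ f` is `g`
composed with the homothety of ratio `1/m` followed by a translation that keeps `ℍ` in `ℍ`, hence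
harmonic. If `t̄` is the height of the mean point, then `t_j ≤ m t̄`, so
`∏ t_j^{s_j} ≤ (m t̄)^λ` and the bound on `|g| t^λ` at the mean point bounds `f`. -/

section Homothety

variable {𝕜 : Type*} [NontriviallyNormedField 𝕜]
  {E : Type*} [NormedAddCommGroup E] [NormedSpace 𝕜 E]
  {F : Type*} [NormedAddCommGroup F] [NormedSpace 𝕜 F]

theorem fderiv_comp_smul_add (f : E → F) (a : 𝕜) (c y : E) :
    fderiv 𝕜 (fun y => f (a • y + c)) y = a • fderiv 𝕜 f (a • y + c) := by
  have h := fderiv_comp_smul (f := fun u => f (u + c)) (x := y) a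
  rwa [fderiv_comp_add_right] at h

theorem fderiv_fderiv_comp_smul_add (f : E → F) (a : 𝕜) (c u v y : E) :
    fderiv 𝕜 (fun x => fderiv 𝕜 (fun x => f (a • x + c)) x u) y v
      = (a * a) • fderiv 𝕜 (fun z => fderiv 𝕜 f z u) (a • y + c) v := by
  simp_rw [fderiv_comp_smul_add, FunLike.coe_smul, Pi.smul_apply]
  rw [show (fun y => a • fderiv 𝕜 f (a • y + c) u) = a • fun y => fderiv 𝕜 f (a • y + c) u
      from rfl, fderiv_const_smul_field, Pi.smul_apply,
    fderiv_comp_smul_add (fun z => fderiv 𝕜 f z u)]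
  simp only [FunLike.coe_smul, Pi.smul_apply, mul_smul]

end Homothety

theorem IsHarmonicOn.comp_smul_add {ι : Type*} [Fintype ι] [DecidableEq ι]
    {g : (ι → ℝ) → ℝ} {U V : Set (ι → ℝ)} (hg : IsHarmonicOn g U) (a : ℝ) (c : ι → ℝ)
    (hVU : Set.MapsTo (fun y => a • y + c) V U) :
    IsHarmonicOn (fun y => g (a • y + c)) V := by
  refine ⟨hg.1.comp ((contDiff_id.const_smul a).add contDiff_const).contDiffOn hVU,
    fun y hy => ?_⟩
  simp_rw [fderiv_fderiv_comp_smul_add, smul_eq_mul, ← Finset.mul_sum, hg.2 _ (hVU hy),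
    mul_zero]

theorem Finset.prod_rpow_le_rpow_sum {ι : Type*} (S : Finset ι) {t s : ι → ℝ}
    (ht : ∀ j ∈ S, 0 ≤ t j) (hs : ∀ j ∈ S, 0 ≤ s j) :
    ∏ j ∈ S, t j ^ s j ≤ (∑ j ∈ S, t j) ^ ∑ j ∈ S, s j := by
  rw [Real.rpow_sum_of_nonneg (Finset.sum_nonneg ht) hs]
  exact Finset.prod_le_prod (fun j hj => Real.rpow_nonneg (ht j hj) _) fun j hj =>
    Real.rpow_le_rpow (ht j hj) (Finset.single_le_sum ht hj) (hs j hj)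

noncomputable def meanPoint {m : ℕ} {ι : Type*} (z : Fin m × ι → ℝ) : ι → ℝ :=
  fun k => (∑ i, z (i, k)) / m

section MeanPoint

variable {m : ℕ} {ι : Type*}

theorem meanPoint_diag (hm : m ≠ 0) (y : ι → ℝ) :
    meanPoint (fun q : Fin m × ι => y q.2) = y := by
  ext k
  simp [meanPoint, hm]

theorem natCast_mul_meanPoint (z : Fin m × ι → ℝ) (k : ι) :
    m * meanPoint z k = ∑ i, z (i, k) := by
  rcases eq_or_ne m 0 with rfl | hm
  · simp
  · exact mul_div_cancel₀ _ (Nat.cast_ne_zero.2 hm)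

theorem meanPoint_ite (j : Fin m) (y : ι → ℝ) (w : Fin m × ι → ℝ) :
    meanPoint (fun q => if q.1 = j then y q.2 else w q)
      = (m : ℝ)⁻¹ • y + meanPoint (fun q => if q.1 = j then 0 else w q) := by
  ext k
  simp only [meanPoint, Pi.add_apply, Pi.smul_apply, smul_eq_mul]
  have hsplit : ∀ i, (if i = j then y k else w (i, k))
      = (if i = j then y k else 0) + (if i = j then 0 else w (i, k)) := fun i => by
    split_ifs <;> simp
  simp_rw [hsplit, Finset.sum_add_distrib, Finset.sum_ite_eq', Finset.mem_univ, if_true,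
    add_div, inv_mul_eq_div]

end MeanPoint

theorem harmonicEachVar_comp_meanPoint {n m : ℕ} {g : (Fin (n + 1) → ℝ) → ℝ}
    (hg : IsHarmonicOn g {z : Fin (n + 1) → ℝ | 0 < z (Fin.last n)}) :
    HarmonicEachVar n m (fun z => g (meanPoint z)) := by
  intro j w hw
  simp_rw [meanPoint_ite]
  refine hg.comp_smul_add _ _ fun y (hy : 0 < y (Fin.last n)) => ?_
  have hshift : 0 ≤ meanPoint (fun q => if q.1 = j then 0 else w q) (Fin.last n) :=
    div_nonneg (Finset.sum_nonneg fun i _ => ite_nonneg le_rfl (hw i).le) m.cast_nonneg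
  have hm : (0 : ℝ) < m := Nat.cast_pos.2 j.pos
  change 0 < (m : ℝ)⁻¹ * y (Fin.last n) + _
  positivity

theorem harmonic_bloch_extension_general
    (n m : ℕ) (hm : 1 ≤ m)
    (s : Fin m → ℝ) (hs : ∀ j, 0 < s j)
    (g : (Fin (n + 1) → ℝ) → ℝ)
    (hg : IsHarmonicOn g {z : Fin (n + 1) → ℝ | 0 < z (Fin.last n)})
    (hgsup : ∃ C : ℝ, ∀ z : Fin (n + 1) → ℝ, 0 < z (Fin.last n) →
        |g z| * z (Fin.last n) ^ (∑ j : Fin m, s j) ≤ C) :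
    ∃ f : ((Fin m × Fin (n + 1)) → ℝ) → ℝ,
      HarmonicEachVar n m f ∧
      (∃ C : ℝ, ∀ z : (Fin m × Fin (n + 1)) → ℝ, (∀ i : Fin m, 0 < z (i, Fin.last n)) →
          |f z| * ∏ j : Fin m, z (j, Fin.last n) ^ s j ≤ C) ∧
      ∀ z : Fin (n + 1) → ℝ, 0 < z (Fin.last n) → f (fun q => z q.2) = g z := by
  obtain ⟨C, hC⟩ := hgsup
  have hm0 : (0 : ℝ) < m := by exact_mod_cast hm
  have : Nonempty (Fin m) := ⟨⟨0, hm⟩⟩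
  refine ⟨fun z => g (meanPoint z), harmonicEachVar_comp_meanPoint hg,
    ⟨m ^ (∑ j, s j) * C, fun z hz => ?_⟩, fun z _ => congrArg g (meanPoint_diag (by omega) z)⟩
  have hmean : 0 < meanPoint z (Fin.last n) :=
    div_pos (Finset.sum_pos (fun i _ => hz i) Finset.univ_nonempty) hm0
  have hprod : ∏ j, z (j, Fin.last n) ^ s j ≤ (m * meanPoint z (Fin.last n)) ^ ∑ j, s j := by
    rw [natCast_mul_meanPoint]
    exact Finset.univ.prod_rpow_le_rpow_sum (fun j _ => (hz j).le) fun j _ => (hs j).le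
  calc |g (meanPoint z)| * ∏ j, z (j, Fin.last n) ^ s j
      ≤ |g (meanPoint z)| * (m * meanPoint z (Fin.last n)) ^ ∑ j, s j := by gcongr
    _ = m ^ (∑ j, s j) * (|g (meanPoint z)| * meanPoint z (Fin.last n) ^ ∑ j, s j) := by
      rw [Real.mul_rpow hm0.le hmean.le]; ring
    _ ≤ m ^ (∑ j, s j) * C := by gcongr; exact hC _ hmean

/-- for `s_j > 0` and `λ = ∑ s_j`, every `g` harmonic on `ℍ` with
`sup_{(x,t)∈ℍ} |g(x,t)| t^λ < ∞` is the trace of a function `f : ℍ^m → ℝ` harmonic in each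
variable separately with `sup_{ℍ^m} |f(z₁,…,z_m)| t₁^{s₁}⋯t_m^{s_m} < ∞`;
that is, `A^∞_λ(ℍ) ⊆ Trace(h̃A^∞_{s⃗})`. -/
theorem harmonic_bloch_extension
    (n m : ℕ) (hn : 1 ≤ n) (hm : 1 ≤ m)
    (s : Fin m → ℝ) (hs : ∀ j, 0 < s j)
    (g : (Fin (n + 1) → ℝ) → ℝ)
    (hg : IsHarmonicOn g {z : Fin (n + 1) → ℝ | 0 < z (Fin.last n)})
    (hgsup : ∃ C : ℝ, ∀ z : Fin (n + 1) → ℝ, 0 < z (Fin.last n) →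
        |g z| * z (Fin.last n) ^ (∑ j : Fin m, s j) ≤ C) :
    ∃ f : ((Fin m × Fin (n + 1)) → ℝ) → ℝ,
      HarmonicEachVar n m f ∧
      (∃ C : ℝ, ∀ z : (Fin m × Fin (n + 1)) → ℝ, (∀ i : Fin m, 0 < z (i, Fin.last n)) →
          |f z| * ∏ j : Fin m, z (j, Fin.last n) ^ s j ≤ C) ∧
      ∀ z : Fin (n + 1) → ℝ, 0 < z (Fin.last n) → f (fun q => z q.2) = g z :=
  harmonic_bloch_extension_general n m hm s hs g hg hgsup
end

section
/- Let m ≥ 1, ν₁,…,ν_m > 0, and set s = ∑_{j=1}^m ν_j. Then the set of functions g : ℂ₊ → ℂ for which there exists a holomorphic function f on ℂ₊^m with sup_{(z₁,…,z_m)∈ℂ₊^m} |f(z₁,…,z_m)| ∏_{j=1}^m (Im z_j)^{ν_j} < ∞ and f(z,…,z) = g(z) for all z ∈ ℂ₊, is exactly the set of holomorphic functions g on ℂ₊ with sup_{z∈ℂ₊} |g(z)| (Im z)^s < ∞. In other words, Trace(A^∞_{ν⃗}(ℂ₊^m)) = A^∞_s(ℂ₊). -/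
open Finset

/-!
Restricting to the diagonal turns `∏ (Im z_j)^{ν_j}` into `(Im z)^s`, so traces lie in `A^∞_s`.
Conversely `g ∈ A^∞_s` is the trace of `f(z) = g((z₁ + ⋯ + z_m)/m)`: the mean stays in `ℂ₊`,
and `Im z_j ≤ m · Im(mean z)` for every `j` gives the weighted bound with constant `m^s`.
-/

theorem Real.prod_rpow_le_sum_rpow_sum {ι : Type*} (s : Finset ι) {x ν : ι → ℝ}
    (hx : ∀ i ∈ s, 0 ≤ x i) (hν : ∀ i ∈ s, 0 ≤ ν i) :
    ∏ i ∈ s, x i ^ ν i ≤ (∑ i ∈ s, x i) ^ (∑ i ∈ s, ν i) := by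
  rw [Real.rpow_sum_of_nonneg (sum_nonneg hx) hν]
  exact prod_le_prod (fun i hi => Real.rpow_nonneg (hx i hi) _) fun i hi =>
    Real.rpow_le_rpow (hx i hi) (single_le_sum hx hi) (hν i hi)

namespace Complex

variable {ι : Type*} [Fintype ι]

noncomputable def coordMean (z : ι → ℂ) : ℂ := (∑ i, z i) / Fintype.card ι

theorem differentiable_coordMean : Differentiable ℂ (coordMean : (ι → ℂ) → ℂ) := by
  unfold coordMean
  fun_prop

theorem coordMean_const [Nonempty ι] (w : ℂ) : coordMean (fun _ : ι => w) = w := by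
  rw [coordMean, sum_const, card_univ, nsmul_eq_mul,
    mul_div_cancel_left₀ _ (Nat.cast_ne_zero.mpr Fintype.card_ne_zero)]

theorem card_mul_im_coordMean [Nonempty ι] (z : ι → ℂ) :
    (Fintype.card ι : ℝ) * (coordMean z).im = ∑ i, (z i).im := by
  rw [coordMean, div_natCast_im, im_sum,
    mul_div_cancel₀ _ (Nat.cast_ne_zero.mpr Fintype.card_ne_zero)]

theorem im_coordMean_pos [Nonempty ι] {z : ι → ℂ} (hz : ∀ i, 0 < (z i).im) :
    0 < (coordMean z).im := by
  have hsum : 0 < (Fintype.card ι : ℝ) * (coordMean z).im := by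
    rw [card_mul_im_coordMean]
    exact sum_pos (fun i _ => hz i) univ_nonempty
  exact pos_of_mul_pos_right hsum (Nat.cast_nonneg _)

theorem prod_im_rpow_le_card_rpow_mul [Nonempty ι] {ν : ι → ℝ} (hν : ∀ i, 0 ≤ ν i)
    {z : ι → ℂ} (hz : ∀ i, 0 < (z i).im) :
    ∏ i, (z i).im ^ ν i ≤
      (Fintype.card ι : ℝ) ^ (∑ i, ν i) * (coordMean z).im ^ (∑ i, ν i) := by
  rw [← Real.mul_rpow (Nat.cast_nonneg _) (im_coordMean_pos hz).le, card_mul_im_coordMean]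
  exact Real.prod_rpow_le_sum_rpow_sum univ (fun i _ => (hz i).le) fun i _ => hν i

theorem norm_comp_coordMean_mul_prod_im_rpow_le [Nonempty ι] {g : ℂ → ℂ} {ν : ι → ℝ}
    (hν : ∀ i, 0 ≤ ν i) {C : ℝ} (hC : ∀ w : ℂ, 0 < w.im → ‖g w‖ * w.im ^ (∑ i, ν i) ≤ C)
    {z : ι → ℂ} (hz : ∀ i, 0 < (z i).im) :
    ‖g (coordMean z)‖ * ∏ i, (z i).im ^ ν i ≤ (Fintype.card ι : ℝ) ^ (∑ i, ν i) * C :=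
  calc ‖g (coordMean z)‖ * ∏ i, (z i).im ^ ν i
      ≤ ‖g (coordMean z)‖ *
          ((Fintype.card ι : ℝ) ^ (∑ i, ν i) * (coordMean z).im ^ (∑ i, ν i)) :=
        mul_le_mul_of_nonneg_left (prod_im_rpow_le_card_rpow_mul hν hz) (norm_nonneg _)
    _ = (Fintype.card ι : ℝ) ^ (∑ i, ν i) *
          (‖g (coordMean z)‖ * (coordMean z).im ^ (∑ i, ν i)) := by
        ring
    _ ≤ (Fintype.card ι : ℝ) ^ (∑ i, ν i) * C :=
        mul_le_mul_of_nonneg_left (hC _ (im_coordMean_pos hz))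
          (Real.rpow_nonneg (Nat.cast_nonneg _) _)

end Complex

open Complex

/-- for `ν_j > 0` and `s = ∑ ν_j`, the trace set of the weighted Bloch-type
space `A^∞_{ν⃗}(ℂ₊^m)` (holomorphic `f` on `ℂ₊^m` with
`sup |f(z₁,…,z_m)| ∏ (Im z_j)^{ν_j} < ∞`) is exactly `A^∞_s(ℂ₊)`:
`Trace(A^∞_{ν⃗}(ℂ₊^m)) = A^∞_s(ℂ₊)`. -/
theorem trace_bloch_upperHalfPlane
    (m : ℕ) (hm : 1 ≤ m) (ν : Fin m → ℝ) (hν : ∀ j, 0 < ν j) :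
    {g : ℂ → ℂ | ∃ f : (Fin m → ℂ) → ℂ,
        DifferentiableOn ℂ f {z : Fin m → ℂ | ∀ j, 0 < (z j).im} ∧
        (∃ C : ℝ, ∀ z : Fin m → ℂ, (∀ j, 0 < (z j).im) →
          ‖f z‖ * ∏ j : Fin m, (z j).im ^ ν j ≤ C) ∧
        ∀ z : ℂ, 0 < z.im → f (fun _ => z) = g z} =
    {g : ℂ → ℂ | DifferentiableOn ℂ g {z : ℂ | 0 < z.im} ∧
        ∃ C : ℝ, ∀ z : ℂ, 0 < z.im →
          ‖g z‖ * z.im ^ (∑ j : Fin m, ν j) ≤ C} := by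
  have : Nonempty (Fin m) := Fin.pos_iff_nonempty.mp hm
  ext g
  constructor
  · rintro ⟨f, hf, ⟨C, hC⟩, hdiag⟩
    have hg : DifferentiableOn ℂ (fun z : ℂ => f fun _ => z) {z : ℂ | 0 < z.im} :=
      hf.comp (differentiable_pi.mpr fun _ => differentiable_id).differentiableOn
        fun _ hz _ => hz
    refine ⟨hg.congr fun z hz => (hdiag z hz).symm, C, fun z hz => ?_⟩
    rw [← hdiag z hz, Real.rpow_sum_of_pos hz]
    exact hC _ fun _ => hz
  · rintro ⟨hg, C, hC⟩
    exact ⟨g ∘ coordMean, hg.comp differentiable_coordMean.differentiableOn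
        fun _ hz => im_coordMean_pos hz,
      ⟨_, fun _ hz => norm_comp_coordMean_mul_prod_im_rpow_le (fun j => (hν j).le) hC hz⟩,
      fun z _ => congrArg g (coordMean_const z)⟩
end

section
/- Let n ≥ 1, m ≥ 1, r₁,…,r_m > 0 and r = ∑_{j=1}^m r_j. Then Trace(Λ(r₁,…,r_m)) = Λ(r): the set of functions g : B → ℂ for which there exists f ∈ H(B^m) with sup_{(z₁,…,z_m)∈B^m} |f(z₁,…,z_m)| ∏_{j=1}^m (1−|z_j|²)^{r_j} < ∞ and f(z,…,z) = g(z) for all z ∈ B, is exactly the set of g ∈ H(B) with sup_{z∈B} |g(z)| (1−|z|²)^r < ∞. -/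
/-!
Restricting to the diagonal shows that traces lie in `Λ(r)`, since `∏ (1 - |z|²)^{r_j} = (1 - |z|²)^r`.
Conversely, `g ∈ Λ(r)` is the trace of `f(z) = g(∑ (r_j / r) z_j)`: by convexity of `|·|²` and the
weighted AM–GM inequality, `∏ (1 - |z_j|²)^{r_j / r} ≤ ∑ (r_j / r)(1 - |z_j|²) ≤ 1 - |∑ (r_j / r) z_j|²`,
so `f ∈ Λ(r₁,…,r_m)`.
-/

open Finset Metric

section ConvexCombination

variable {ι E : Type*} [SeminormedAddCommGroup E] [NormedSpace ℝ E]
  {s : Finset ι} {w : ι → ℝ}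

theorem norm_sum_smul_sq_le (hw₀ : ∀ i ∈ s, 0 ≤ w i) (hw₁ : ∑ i ∈ s, w i = 1) (z : ι → E) :
    ‖∑ i ∈ s, w i • z i‖ ^ 2 ≤ ∑ i ∈ s, w i * ‖z i‖ ^ 2 :=
  ((convexOn_norm convex_univ).pow (fun _ _ => norm_nonneg _) 2).map_sum_le hw₀ hw₁
    (fun _ _ => Set.mem_univ _)

theorem prod_one_sub_norm_sq_rpow_le (hw₀ : ∀ i ∈ s, 0 ≤ w i) (hw₁ : ∑ i ∈ s, w i = 1)
    {z : ι → E} (hz : ∀ i ∈ s, ‖z i‖ ≤ 1) :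
    ∏ i ∈ s, (1 - ‖z i‖ ^ 2) ^ w i ≤ 1 - ‖∑ i ∈ s, w i • z i‖ ^ 2 :=
  calc ∏ i ∈ s, (1 - ‖z i‖ ^ 2) ^ w i
      ≤ ∑ i ∈ s, w i * (1 - ‖z i‖ ^ 2) :=
        Real.geom_mean_le_arith_mean_weighted s _ _ hw₀ hw₁ fun i hi => by
          nlinarith [hz i hi, norm_nonneg (z i)]
    _ = 1 - ∑ i ∈ s, w i * ‖z i‖ ^ 2 := by
        simp only [mul_sub, mul_one, sum_sub_distrib, hw₁]
    _ ≤ 1 - ‖∑ i ∈ s, w i • z i‖ ^ 2 := by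
        linarith [norm_sum_smul_sq_le hw₀ hw₁ z]

theorem prod_one_sub_norm_sq_rpow_le_of_sum_pos {r : ι → ℝ} (hr : ∀ i ∈ s, 0 ≤ r i)
    (hR : 0 < ∑ i ∈ s, r i) {z : ι → E} (hz : ∀ i ∈ s, ‖z i‖ ≤ 1) :
    ∏ i ∈ s, (1 - ‖z i‖ ^ 2) ^ r i ≤
      (1 - ‖∑ i ∈ s, (r i / ∑ j ∈ s, r j) • z i‖ ^ 2) ^ ∑ i ∈ s, r i := by
  set R := ∑ i ∈ s, r i
  have ht : ∀ i ∈ s, 0 ≤ 1 - ‖z i‖ ^ 2 := fun i hi => by nlinarith [hz i hi, norm_nonneg (z i)]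
  have hw₀ : ∀ i ∈ s, 0 ≤ r i / R := fun i hi => div_nonneg (hr i hi) hR.le
  have hw₁ : ∑ i ∈ s, r i / R = 1 := by rw [← sum_div, div_self hR.ne']
  have hrescale : ∏ i ∈ s, (1 - ‖z i‖ ^ 2) ^ r i = (∏ i ∈ s, (1 - ‖z i‖ ^ 2) ^ (r i / R)) ^ R := by
    rw [← Real.finsetProd_rpow _ _ fun i hi => Real.rpow_nonneg (ht i hi) _]
    refine prod_congr rfl fun i hi => ?_
    rw [← Real.rpow_mul (ht i hi), div_mul_cancel₀ _ hR.ne']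
  rw [hrescale]
  exact Real.rpow_le_rpow (prod_nonneg fun i hi => Real.rpow_nonneg (ht i hi) _)
    (prod_one_sub_norm_sq_rpow_le hw₀ hw₁ hz) hR.le

end ConvexCombination

section Trace

variable {E : Type*} [NormedAddCommGroup E] [NormedSpace ℂ E] {m : ℕ} {r : Fin m → ℝ}
  {g : E → ℂ}

theorem differentiableOn_and_bounded_of_diagonal_eq {f : (Fin m → E) → ℂ}
    (hf : DifferentiableOn ℂ f {z | ∀ j, z j ∈ ball (0 : E) 1})
    (hfC : ∃ C : ℝ, ∀ z : Fin m → E, (∀ j, z j ∈ ball (0 : E) 1) →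
      ‖f z‖ * ∏ j, (1 - ‖z j‖ ^ 2) ^ r j ≤ C)
    (hfg : ∀ z ∈ ball (0 : E) 1, f (fun _ => z) = g z) :
    DifferentiableOn ℂ g (ball (0 : E) 1) ∧
      ∃ C : ℝ, ∀ z ∈ ball (0 : E) 1, ‖g z‖ * (1 - ‖z‖ ^ 2) ^ (∑ j, r j) ≤ C := by
  obtain ⟨C, hC⟩ := hfC
  refine ⟨?_, C, fun z hz => ?_⟩
  · have hdiag : DifferentiableOn ℂ (fun z : E => f fun _ => z) (ball 0 1) :=
      hf.comp (by fun_prop) fun z hz _ => hz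
    exact hdiag.congr fun z hz => (hfg z hz).symm
  · have ht : 0 < 1 - ‖z‖ ^ 2 := by
      nlinarith [mem_ball_zero_iff.mp hz, norm_nonneg z]
    rw [Real.rpow_sum_of_pos ht, ← hfg z hz]
    exact hC _ fun _ => hz

theorem exists_diagonal_eq_of_differentiableOn_of_bounded (hm : 1 ≤ m) (hr : ∀ j, 0 < r j)
    (hg : DifferentiableOn ℂ g (ball (0 : E) 1))
    (hgC : ∃ C : ℝ, ∀ z ∈ ball (0 : E) 1, ‖g z‖ * (1 - ‖z‖ ^ 2) ^ (∑ j, r j) ≤ C) :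
    ∃ f : (Fin m → E) → ℂ, DifferentiableOn ℂ f {z | ∀ j, z j ∈ ball (0 : E) 1} ∧
      (∃ C : ℝ, ∀ z : Fin m → E, (∀ j, z j ∈ ball (0 : E) 1) →
        ‖f z‖ * ∏ j, (1 - ‖z j‖ ^ 2) ^ r j ≤ C) ∧
      ∀ z ∈ ball (0 : E) 1, f (fun _ => z) = g z := by
  obtain ⟨C, hC⟩ := hgC
  set R := ∑ j, r j
  have hR : 0 < R := sum_pos (fun j _ => hr j) ⟨⟨0, hm⟩, mem_univ _⟩
  have hw₁ : ∑ j, r j / R = 1 := by rw [← sum_div, div_self hR.ne']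
  set mean : (Fin m → E) → E := fun z => ∑ j, (r j / R) • z j
  have hmean_mem : ∀ z : Fin m → E, (∀ j, z j ∈ ball (0 : E) 1) → mean z ∈ ball 0 1 :=
    fun z hz => (convex_ball 0 1).sum_mem (fun j _ => div_nonneg (hr j).le hR.le) hw₁
      fun j _ => hz j
  refine ⟨g ∘ mean, hg.comp (by fun_prop) hmean_mem, ⟨C, fun z hz => ?_⟩, fun z _ => ?_⟩
  · have hweight : ∏ j, (1 - ‖z j‖ ^ 2) ^ r j ≤ (1 - ‖mean z‖ ^ 2) ^ R :=
      prod_one_sub_norm_sq_rpow_le_of_sum_pos (fun j _ => (hr j).le) hR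
        fun j _ => (mem_ball_zero_iff.mp (hz j)).le
    calc ‖g (mean z)‖ * ∏ j, (1 - ‖z j‖ ^ 2) ^ r j
        ≤ ‖g (mean z)‖ * (1 - ‖mean z‖ ^ 2) ^ R := by gcongr
      _ ≤ C := hC _ (hmean_mem z hz)
  · simp only [Function.comp_apply, mean, ← sum_smul, hw₁, one_smul]

end Trace

theorem trace_bloch_ball_general
    (n m : ℕ) (hm : 1 ≤ m) (r : Fin m → ℝ) (hr : ∀ j, 0 < r j) :
    {g : EuclideanSpace ℂ (Fin n) → ℂ | ∃ f : (Fin m → EuclideanSpace ℂ (Fin n)) → ℂ,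
        DifferentiableOn ℂ f
          {z : Fin m → EuclideanSpace ℂ (Fin n) |
            ∀ j, z j ∈ Metric.ball (0 : EuclideanSpace ℂ (Fin n)) 1} ∧
        (∃ C : ℝ, ∀ z : Fin m → EuclideanSpace ℂ (Fin n),
          (∀ j, z j ∈ Metric.ball (0 : EuclideanSpace ℂ (Fin n)) 1) →
          ‖f z‖ * ∏ j : Fin m, (1 - ‖z j‖ ^ 2) ^ r j ≤ C) ∧
        ∀ z ∈ Metric.ball (0 : EuclideanSpace ℂ (Fin n)) 1, f (fun _ => z) = g z} =
    {g : EuclideanSpace ℂ (Fin n) → ℂ |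
        DifferentiableOn ℂ g (Metric.ball (0 : EuclideanSpace ℂ (Fin n)) 1) ∧
        ∃ C : ℝ, ∀ z ∈ Metric.ball (0 : EuclideanSpace ℂ (Fin n)) 1,
          ‖g z‖ * (1 - ‖z‖ ^ 2) ^ (∑ j : Fin m, r j) ≤ C} :=
  Set.ext fun _ =>
    ⟨fun ⟨_, hf, hfC, hfg⟩ => differentiableOn_and_bounded_of_diagonal_eq hf hfC hfg,
      fun ⟨hg, hgC⟩ => exists_diagonal_eq_of_differentiableOn_of_bounded hm hr hg hgC⟩

/-- for `r_j > 0` and `r = ∑ r_j`, `Trace(Λ(r₁,…,r_m)) = Λ(r)`: the set of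
traces `g(z) = f(z,…,z)` of holomorphic `f` on `B^m` with
`sup |f(z₁,…,z_m)| ∏ (1−|z_j|²)^{r_j} < ∞` equals the set of holomorphic `g` on `B`
with `sup |g(z)| (1−|z|²)^r < ∞`. -/
theorem trace_bloch_ball
    (n m : ℕ) (hn : 1 ≤ n) (hm : 1 ≤ m) (r : Fin m → ℝ) (hr : ∀ j, 0 < r j) :
    {g : EuclideanSpace ℂ (Fin n) → ℂ | ∃ f : (Fin m → EuclideanSpace ℂ (Fin n)) → ℂ,
        DifferentiableOn ℂ f
          {z : Fin m → EuclideanSpace ℂ (Fin n) |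
            ∀ j, z j ∈ Metric.ball (0 : EuclideanSpace ℂ (Fin n)) 1} ∧
        (∃ C : ℝ, ∀ z : Fin m → EuclideanSpace ℂ (Fin n),
          (∀ j, z j ∈ Metric.ball (0 : EuclideanSpace ℂ (Fin n)) 1) →
          ‖f z‖ * ∏ j : Fin m, (1 - ‖z j‖ ^ 2) ^ r j ≤ C) ∧
        ∀ z ∈ Metric.ball (0 : EuclideanSpace ℂ (Fin n)) 1, f (fun _ => z) = g z} =
    {g : EuclideanSpace ℂ (Fin n) → ℂ |
        DifferentiableOn ℂ g (Metric.ball (0 : EuclideanSpace ℂ (Fin n)) 1) ∧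
        ∃ C : ℝ, ∀ z ∈ Metric.ball (0 : EuclideanSpace ℂ (Fin n)) 1,
          ‖g z‖ * (1 - ‖z‖ ^ 2) ^ (∑ j : Fin m, r j) ≤ C} :=
  trace_bloch_ball_general n m hm r hr
end

section
/- Let n ≥ 1, m ≥ 1, r₁,…,r_m > 0 with ∑_{j=1}^m 1/r_j = 1. Then Trace(Λ_log(r₁,…,r_m)) equals the space of g ∈ H(B) with sup_{z∈B} |g(z)| (1−|z|) (log(2/(1−|z|)))^{−1} < ∞: (i) for every f ∈ Λ_log(r₁,…,r_m), the function g(z) = f(z,…,z) satisfies sup_{z∈B} |g(z)| (1−|z|) (log(2/(1−|z|)))^{−1} < ∞; and (ii) every holomorphic g on B with sup_{z∈B} |g(z)| (1−|z|) (log(2/(1−|z|)))^{−1} < ∞ equals f(z,…,z) for some f ∈ Λ_log(r₁,…,r_m). -/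
/-!
On the diagonal the weights multiply to `(1 - |z|) / log (2 / (1 - |z|))` because
`∑ 1/r_j = 1`, which gives (i). For (ii) take `f(z₁, …, z_m) = g((z₁ + ⋯ + z_m) / m)`. At the
mean `w` one has `1 - |z_j| ≤ m (1 - |w|)`, and the weight `t ↦ t / log (2 / t)` is increasing up
to a factor depending only on `m`, so every factor's weight is at most a constant times the weight
at `w`; the weighted geometric mean of these bounds is the same constant times the weight at `w`.
-/

open Finset

section Average

variable (𝕜 : Type*) [RCLike 𝕜] {ι E : Type*} [Fintype ι] [NormedAddCommGroup E]
  [NormedSpace 𝕜 E]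

noncomputable def average (z : ι → E) : E := (Fintype.card ι : 𝕜)⁻¹ • ∑ i, z i

theorem average_const [Nonempty ι] (x : E) : average 𝕜 (fun _ : ι => x) = x := by
  have hcard : (Fintype.card ι : 𝕜) ≠ 0 := Nat.cast_ne_zero.mpr Fintype.card_ne_zero
  rw [average, sum_const, card_univ, ← Nat.cast_smul_eq_nsmul 𝕜, inv_smul_smul₀ hcard]

theorem differentiable_average : Differentiable 𝕜 (average 𝕜 : (ι → E) → E) :=
  (Differentiable.fun_sum fun i _ => differentiable_apply i).const_smul _

variable {𝕜}

theorem norm_average_le (z : ι → E) :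
    ‖average 𝕜 z‖ ≤ (Fintype.card ι : ℝ)⁻¹ * ∑ i, ‖z i‖ := by
  rw [average, norm_smul, norm_inv, RCLike.norm_natCast]
  gcongr
  exact norm_sum_le _ _

theorem norm_average_lt_one [Nonempty ι] {z : ι → E} (hz : ∀ i, ‖z i‖ < 1) :
    ‖average 𝕜 z‖ < 1 := by
  have hcard : (0 : ℝ) < Fintype.card ι := Nat.cast_pos.mpr Fintype.card_pos
  have hsum : ∑ i, ‖z i‖ < Fintype.card ι := by
    simpa using sum_lt_sum_of_nonempty univ_nonempty fun i _ => hz i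
  calc ‖average 𝕜 z‖ ≤ (Fintype.card ι : ℝ)⁻¹ * ∑ i, ‖z i‖ := norm_average_le z
    _ < 1 := by rwa [inv_mul_lt_one₀ hcard]

theorem one_sub_norm_le_card_mul_one_sub_norm_average {z : ι → E} (hz : ∀ i, ‖z i‖ ≤ 1)
    (j : ι) : 1 - ‖z j‖ ≤ Fintype.card ι * (1 - ‖average 𝕜 z‖) := by
  have hcard : (Fintype.card ι : ℝ) * (Fintype.card ι : ℝ)⁻¹ ≤ 1 := mul_inv_le_one
  calc 1 - ‖z j‖ ≤ ∑ i, (1 - ‖z i‖) :=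
        single_le_sum (f := fun i => 1 - ‖z i‖) (fun i _ => sub_nonneg.mpr (hz i)) (mem_univ j)
    _ = Fintype.card ι - ∑ i, ‖z i‖ := by simp [sum_sub_distrib]
    _ ≤ Fintype.card ι * (1 - ‖average 𝕜 z‖) := by
        nlinarith [norm_average_le (𝕜 := 𝕜) z, norm_nonneg (average 𝕜 z),
          sum_nonneg fun i (_ : i ∈ univ) => norm_nonneg (z i)]

end Average

section WeightedProducts

variable {ι : Type*} {s : Finset ι} {a : ι → ℝ}

theorem Real.prod_rpow_of_sum_eq_one (ha : ∑ i ∈ s, a i = 1) {x : ℝ} (hx : 0 < x) :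
    ∏ i ∈ s, x ^ a i = x := by
  rw [← Real.rpow_sum_of_pos hx, ha, Real.rpow_one]

theorem Real.prod_rpow_le_of_sum_eq_one (ha₀ : ∀ i ∈ s, 0 ≤ a i) (ha : ∑ i ∈ s, a i = 1)
    {x : ι → ℝ} {y : ℝ} (hx : ∀ i ∈ s, 0 ≤ x i) (hxy : ∀ i ∈ s, x i ≤ y) (hy : 0 < y) :
    ∏ i ∈ s, x i ^ a i ≤ y :=
  calc ∏ i ∈ s, x i ^ a i ≤ ∏ i ∈ s, y ^ a i :=
        prod_le_prod (fun i hi => Real.rpow_nonneg (hx i hi) _)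
          fun i hi => Real.rpow_le_rpow (hx i hi) (hxy i hi) (ha₀ i hi)
    _ = y := Real.prod_rpow_of_sum_eq_one ha hy

theorem Real.rpow_mul_rpow_neg {x y : ℝ} (hx : 0 ≤ x) (hy : 0 ≤ y) (p : ℝ) :
    x ^ p * y ^ (-p) = (x * y⁻¹) ^ p := by
  rw [Real.mul_rpow hx (inv_nonneg.mpr hy), Real.inv_rpow hy, Real.rpow_neg hy]

end WeightedProducts

section LogBlochWeight

open Real

noncomputable def logBlochWeight (t : ℝ) : ℝ := t * (log (2 / t))⁻¹

theorem log_two_le_log_two_div {t : ℝ} (ht : t ∈ Set.Ioc 0 1) : log 2 ≤ log (2 / t) :=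
  log_le_log two_pos (le_div_self zero_le_two ht.1 ht.2)

theorem logBlochWeight_pos {t : ℝ} (ht : t ∈ Set.Ioc 0 1) : 0 < logBlochWeight t :=
  mul_pos ht.1 (inv_pos.mpr ((log_pos one_lt_two).trans_le (log_two_le_log_two_div ht)))

theorem logBlochWeight_le_of_le_mul {t s c : ℝ} (ht : t ∈ Set.Ioc 0 1) (hs : s ∈ Set.Ioc 0 1)
    (hc : 1 ≤ c) (hts : t ≤ c * s) :
    logBlochWeight t ≤ c * (1 + log c / log 2) * logBlochWeight s := by
  have ht₀ : 0 < t := ht.1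
  have hs₀ : 0 < s := hs.1
  have hlog2 : 0 < log 2 := log_pos one_lt_two
  have hLt : log 2 ≤ log (2 / t) := log_two_le_log_two_div ht
  have hLs : 0 < log (2 / s) := hlog2.trans_le (log_two_le_log_two_div hs)
  have hlogc : 0 ≤ log c := log_nonneg hc
  have hLs_le : log (2 / s) ≤ (1 + log c / log 2) * log (2 / t) := by
    have h2s : 2 / s ≤ 2 / t * c := by
      rw [div_mul_eq_mul_div, div_le_div_iff₀ hs₀ ht₀]; nlinarith
    have hc_le : log c ≤ log c / log 2 * log (2 / t) := by
      rw [div_mul_eq_mul_div, le_div_iff₀ hlog2]; exact mul_le_mul_of_nonneg_left hLt hlogc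
    calc log (2 / s) ≤ log (2 / t * c) := log_le_log (by positivity) h2s
      _ = log (2 / t) + log c := log_mul (by positivity) (by positivity)
      _ ≤ (1 + log c / log 2) * log (2 / t) := by linarith
  unfold logBlochWeight
  rw [← div_eq_mul_inv, ← div_eq_mul_inv, div_le_iff₀ (hlog2.trans_le hLt)]
  calc t ≤ c * s := hts
    _ = c * s * (log (2 / s))⁻¹ * log (2 / s) := by field_simp
    _ ≤ c * s * (log (2 / s))⁻¹ * ((1 + log c / log 2) * log (2 / t)) := by gcongr
    _ = c * (1 + log c / log 2) * (s * (log (2 / s))⁻¹) * log (2 / t) := by ring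

theorem prod_logBlochWeight_rpow_eq {ι : Type*} {s : Finset ι} {t : ι → ℝ} (a : ι → ℝ)
    (ht : ∀ i ∈ s, t i ∈ Set.Ioc 0 1) :
    ∏ i ∈ s, logBlochWeight (t i) ^ a i = ∏ i ∈ s, t i ^ a i * log (2 / t i) ^ (-a i) :=
  prod_congr rfl fun i hi => (rpow_mul_rpow_neg (ht i hi).1.le
    ((log_pos one_lt_two).le.trans (log_two_le_log_two_div (ht i hi))) _).symm

theorem one_sub_norm_mem_Ioc {E : Type*} [SeminormedAddGroup E] {x : E} (hx : ‖x‖ < 1) :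
    1 - ‖x‖ ∈ Set.Ioc 0 1 :=
  ⟨sub_pos.mpr hx, sub_le_self _ (norm_nonneg x)⟩

theorem prod_logBlochWeight_rpow_le_average {𝕜 ι E : Type*} [RCLike 𝕜] [Fintype ι] [Nonempty ι]
    [NormedAddCommGroup E] [NormedSpace 𝕜 E] {a : ι → ℝ} (ha₀ : ∀ i, 0 ≤ a i)
    (ha : ∑ i, a i = 1) {z : ι → E} (hz : ∀ i, ‖z i‖ < 1) :
    ∏ i, logBlochWeight (1 - ‖z i‖) ^ a i ≤
      Fintype.card ι * (1 + log (Fintype.card ι) / log 2) *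
        logBlochWeight (1 - ‖average 𝕜 z‖) := by
  have hw := one_sub_norm_mem_Ioc (norm_average_lt_one (𝕜 := 𝕜) hz)
  have hK : 0 < Fintype.card ι * (1 + log (Fintype.card ι) / log 2) := by positivity
  refine prod_rpow_le_of_sum_eq_one (fun i _ => ha₀ i) ha
    (fun i _ => (logBlochWeight_pos (one_sub_norm_mem_Ioc (hz i))).le) (fun i _ => ?_)
    (mul_pos hK (logBlochWeight_pos hw))
  exact logBlochWeight_le_of_le_mul (one_sub_norm_mem_Ioc (hz i)) hw
    (Nat.one_le_cast.mpr Fintype.card_pos)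
    (one_sub_norm_le_card_mul_one_sub_norm_average (fun i => (hz i).le) i)

end LogBlochWeight

theorem trace_logBloch_ball_general
    (n m : ℕ) (hm : 1 ≤ m)
    (r : Fin m → ℝ) (hr : ∀ j, 0 < r j) (hsum : ∑ j : Fin m, 1 / r j = 1) :
    (∀ f : (Fin m → EuclideanSpace ℂ (Fin n)) → ℂ,
      DifferentiableOn ℂ f
        {z : Fin m → EuclideanSpace ℂ (Fin n) |
          ∀ j, z j ∈ Metric.ball (0 : EuclideanSpace ℂ (Fin n)) 1} →
      (∃ C : ℝ, ∀ z : Fin m → EuclideanSpace ℂ (Fin n),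
        (∀ j, z j ∈ Metric.ball (0 : EuclideanSpace ℂ (Fin n)) 1) →
        ‖f z‖ * ∏ j : Fin m,
          (1 - ‖z j‖) ^ (1 / r j) * (Real.log (2 / (1 - ‖z j‖))) ^ (-(1 / r j)) ≤ C) →
      ∃ C : ℝ, ∀ z ∈ Metric.ball (0 : EuclideanSpace ℂ (Fin n)) 1,
        ‖f (fun _ => z)‖ * (1 - ‖z‖) * (Real.log (2 / (1 - ‖z‖)))⁻¹ ≤ C) ∧
    (∀ g : EuclideanSpace ℂ (Fin n) → ℂ,
      DifferentiableOn ℂ g (Metric.ball (0 : EuclideanSpace ℂ (Fin n)) 1) →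
      (∃ C : ℝ, ∀ z ∈ Metric.ball (0 : EuclideanSpace ℂ (Fin n)) 1,
        ‖g z‖ * (1 - ‖z‖) * (Real.log (2 / (1 - ‖z‖)))⁻¹ ≤ C) →
      ∃ f : (Fin m → EuclideanSpace ℂ (Fin n)) → ℂ,
        DifferentiableOn ℂ f
          {z : Fin m → EuclideanSpace ℂ (Fin n) |
            ∀ j, z j ∈ Metric.ball (0 : EuclideanSpace ℂ (Fin n)) 1} ∧
        (∃ C : ℝ, ∀ z : Fin m → EuclideanSpace ℂ (Fin n),
          (∀ j, z j ∈ Metric.ball (0 : EuclideanSpace ℂ (Fin n)) 1) →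
          ‖f z‖ * ∏ j : Fin m,
            (1 - ‖z j‖) ^ (1 / r j) * (Real.log (2 / (1 - ‖z j‖))) ^ (-(1 / r j)) ≤ C) ∧
        ∀ z ∈ Metric.ball (0 : EuclideanSpace ℂ (Fin n)) 1, f (fun _ => z) = g z) := by
  have : Nonempty (Fin m) := ⟨⟨0, hm⟩⟩
  simp only [mem_ball_zero_iff]
  have hweights {z : Fin m → EuclideanSpace ℂ (Fin n)} (hz : ∀ j, ‖z j‖ < 1) :
      ∏ j, (1 - ‖z j‖) ^ (1 / r j) * Real.log (2 / (1 - ‖z j‖)) ^ (-(1 / r j)) =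
        ∏ j, logBlochWeight (1 - ‖z j‖) ^ (1 / r j) :=
    (prod_logBlochWeight_rpow_eq _ fun j _ => one_sub_norm_mem_Ioc (hz j)).symm
  refine ⟨fun f _ ⟨C, hC⟩ => ⟨C, fun z hz => ?_⟩, fun g hg ⟨C, hC⟩ => ?_⟩
  · have := hC (fun _ => z) fun _ => hz
    rw [hweights fun _ => hz,
      Real.prod_rpow_of_sum_eq_one hsum (logBlochWeight_pos (one_sub_norm_mem_Ioc hz))] at this
    rwa [mul_assoc]
  refine ⟨fun z => g (average ℂ z), hg.comp (differentiable_average ℂ).differentiableOn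
    fun z hz => mem_ball_zero_iff.mpr (norm_average_lt_one hz), ?_,
    fun z _ => congrArg g (average_const ℂ z)⟩
  set K : ℝ := m * (1 + Real.log m / Real.log 2)
  refine ⟨K * C, fun z hz => ?_⟩
  set w := average ℂ z
  have hprod : ∏ j, logBlochWeight (1 - ‖z j‖) ^ (1 / r j) ≤ K * logBlochWeight (1 - ‖w‖) := by
    simpa using prod_logBlochWeight_rpow_le_average (𝕜 := ℂ)
      (fun j => (one_div_pos.mpr (hr j)).le) hsum hz
  calc ‖g w‖ * ∏ j, (1 - ‖z j‖) ^ (1 / r j) * Real.log (2 / (1 - ‖z j‖)) ^ (-(1 / r j))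
      ≤ ‖g w‖ * (K * logBlochWeight (1 - ‖w‖)) := by rw [hweights hz]; gcongr
    _ = K * (‖g w‖ * (1 - ‖w‖) * (Real.log (2 / (1 - ‖w‖)))⁻¹) := by
        unfold logBlochWeight; ring
    _ ≤ K * C := by gcongr; exact hC w (norm_average_lt_one hz)

/-- for `r_j > 0` with `∑ 1/r_j = 1`, `Trace(Λ_log(r₁,…,r_m))` equals the
space of holomorphic `g` on `B` with `sup |g(z)| (1−|z|) (log(2/(1−|z|)))⁻¹ < ∞`:
(i) the trace of any `f ∈ Λ_log(r₁,…,r_m)` satisfies this bound, and (ii) every such `g`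
is the trace of some `f ∈ Λ_log(r₁,…,r_m)`. -/
theorem trace_logBloch_ball
    (n m : ℕ) (hn : 1 ≤ n) (hm : 1 ≤ m)
    (r : Fin m → ℝ) (hr : ∀ j, 0 < r j) (hsum : ∑ j : Fin m, 1 / r j = 1) :
    (∀ f : (Fin m → EuclideanSpace ℂ (Fin n)) → ℂ,
      DifferentiableOn ℂ f
        {z : Fin m → EuclideanSpace ℂ (Fin n) |
          ∀ j, z j ∈ Metric.ball (0 : EuclideanSpace ℂ (Fin n)) 1} →
      (∃ C : ℝ, ∀ z : Fin m → EuclideanSpace ℂ (Fin n),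
        (∀ j, z j ∈ Metric.ball (0 : EuclideanSpace ℂ (Fin n)) 1) →
        ‖f z‖ * ∏ j : Fin m,
          (1 - ‖z j‖) ^ (1 / r j) * (Real.log (2 / (1 - ‖z j‖))) ^ (-(1 / r j)) ≤ C) →
      ∃ C : ℝ, ∀ z ∈ Metric.ball (0 : EuclideanSpace ℂ (Fin n)) 1,
        ‖f (fun _ => z)‖ * (1 - ‖z‖) * (Real.log (2 / (1 - ‖z‖)))⁻¹ ≤ C) ∧
    (∀ g : EuclideanSpace ℂ (Fin n) → ℂ,
      DifferentiableOn ℂ g (Metric.ball (0 : EuclideanSpace ℂ (Fin n)) 1) →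
      (∃ C : ℝ, ∀ z ∈ Metric.ball (0 : EuclideanSpace ℂ (Fin n)) 1,
        ‖g z‖ * (1 - ‖z‖) * (Real.log (2 / (1 - ‖z‖)))⁻¹ ≤ C) →
      ∃ f : (Fin m → EuclideanSpace ℂ (Fin n)) → ℂ,
        DifferentiableOn ℂ f
          {z : Fin m → EuclideanSpace ℂ (Fin n) |
            ∀ j, z j ∈ Metric.ball (0 : EuclideanSpace ℂ (Fin n)) 1} ∧
        (∃ C : ℝ, ∀ z : Fin m → EuclideanSpace ℂ (Fin n),
          (∀ j, z j ∈ Metric.ball (0 : EuclideanSpace ℂ (Fin n)) 1) →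
          ‖f z‖ * ∏ j : Fin m,
            (1 - ‖z j‖) ^ (1 / r j) * (Real.log (2 / (1 - ‖z j‖))) ^ (-(1 / r j)) ≤ C) ∧
        ∀ z ∈ Metric.ball (0 : EuclideanSpace ℂ (Fin n)) 1, f (fun _ => z) = g z) :=
  trace_logBloch_ball_general n m hm r hr hsum
end
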